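/- arXiv:2205.03800 — 2 statements merged into one kernel-verified Lean document; each statement's English description precedes it below -/
import Mathlib

section
/- Let φ : 𝔾 → ℝ be ci-differentiable at every point (τ,z,w) ∈ 𝔾_*, satisfy the Hamilton–Jacobi equation ∂^{ci}_{τ,w}φ(τ,z,w) + ⟨∂^{ci}_{τ,w} g(τ,w), ∇_z φ(τ,z,w)⟩ + H(τ,z,w(−h), ∇_z φ(τ,z,w)) = 0 at every point of 𝔾_*, and satisfy conditions (φ1), (φ2) and the terminal condition. Then φ is the viscosity solution of the Cauchy problem. -/
open Filter Set MeasureTheory Asymptotics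
open scoped InnerProductSpace Topology

noncomputable section

/-- `ℝⁿ` with the Euclidean inner product. -/
abbrev E (n : ℕ) : Type := EuclideanSpace ℝ (Fin n)

/-- The left limit `w(a - 0)`. -/
def leftLimit {n : ℕ} (w : ℝ → E n) (a : ℝ) : E n :=
  limUnder (nhdsWithin a (Set.Iio a)) w

/-- A function is piecewise Lipschitz on `[a,b)` (or `[a,b]`) if there is a partition
`a = ξ₀ < ξ₁ < … < ξ_k = b` such that it is Lipschitz on every `[ξ_i, ξ_{i+1})`. -/
def PiecewiseLipOn {n : ℕ} (x : ℝ → E n) (a b : ℝ) : Prop :=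
  ∃ (k : ℕ) (ξ : ℕ → ℝ), 0 < k ∧ ξ 0 = a ∧ ξ k = b ∧
    (∀ i < k, ξ i < ξ (i + 1)) ∧
    ∀ i < k, ∃ K, LipschitzOnWith K x (Set.Ico (ξ i) (ξ (i + 1)))

/-- `w ∈ PLip`: piecewise Lipschitz on `[-h, 0)`. -/
def IsPLip {n : ℕ} (h : ℝ) (w : ℝ → E n) : Prop := PiecewiseLipOn w (-h) 0

/-- `w ∈ Lip`: Lipschitz continuous on `[-h, 0)`. -/
def IsLip {n : ℕ} (h : ℝ) (w : ℝ → E n) : Prop :=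
  ∃ K, LipschitzOnWith K w (Set.Ico (-h) 0)

/-- `w ∈ C¹`: continuously differentiable on `[-h, 0)` (up to the closure). -/
def IsC1 {n : ℕ} (h : ℝ) (w : ℝ → E n) : Prop := ContDiffOn ℝ 1 w (Set.Icc (-h) 0)

/-- `w ∈ PLip_*`: piecewise Lipschitz and continuously differentiable on
`[-h, -h+δ]` for some `δ > 0`. -/
def IsPLipStar {n : ℕ} (h : ℝ) (w : ℝ → E n) : Prop :=
  IsPLip h w ∧ ∃ δ > 0, ContDiffOn ℝ 1 w (Set.Icc (-h) (-h + δ))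

/-- `‖w‖₁ = ∫_{-h}^0 ‖w(ξ)‖ dξ`. -/
def norm1 {n : ℕ} (h : ℝ) (w : ℝ → E n) : ℝ := ∫ ξ in (-h)..(0:ℝ), ‖w ξ‖

/-- `‖w‖_∞ = sup_{ξ ∈ [-h,0)} ‖w(ξ)‖`. -/
def normInf {n : ℕ} (h : ℝ) (w : ℝ → E n) : ℝ :=
  ⨆ ξ : Set.Ico (-h) (0:ℝ), ‖w ξ.1‖

/-- `(τ,z,w) ∈ 𝔾 = [0,ϑ] × ℝⁿ × PLip` (the `z`-component is unconstrained). -/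
def InG {n : ℕ} (I : ℕ) (h τ : ℝ) (w : ℝ → E n) : Prop :=
  τ ∈ Set.Icc (0:ℝ) ((I:ℝ) * h) ∧ IsPLip h w

/-- `(τ,z,w) ∈ 𝔾_* = ⋃_{i<I} (ih,(i+1)h) × ℝⁿ × PLip_*`. -/
def InGstar {n : ℕ} (I : ℕ) (h τ : ℝ) (w : ℝ → E n) : Prop :=
  (∃ i : ℕ, i < I ∧ τ ∈ Set.Ioo ((i:ℝ) * h) (((i:ℝ) + 1) * h)) ∧ IsPLipStar h w

/-- `x ∈ Λ(τ,z,w)`. -/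
def InLambda {n : ℕ} (I : ℕ) (h τ : ℝ) (z : E n) (w x : ℝ → E n) : Prop :=
  PiecewiseLipOn x (τ - h) ((I:ℝ) * h) ∧ x τ = z ∧
    ∀ t ∈ Set.Ico (τ - h) τ, x t = w (t - τ)

/-- `x ∈ Λ₀(τ,z,w)`: moreover constantly equal to `z` on `[τ,ϑ]`. -/
def InLambda0 {n : ℕ} (I : ℕ) (h τ : ℝ) (z : E n) (w x : ℝ → E n) : Prop :=
  InLambda I h τ z w x ∧ ∀ t ∈ Set.Icc τ ((I:ℝ) * h), x t = z

/-- `x_t(ξ) = x(t + ξ)`. -/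
def shift {n : ℕ} (x : ℝ → E n) (t : ℝ) : ℝ → E n := fun ξ => x (t + ξ)

/-- `(z,w) ∈ P(α)`. -/
def InP {n : ℕ} (h α : ℝ) (z : E n) (w : ℝ → E n) : Prop :=
  IsPLip h w ∧ ‖z‖ ≤ α ∧ normInf h w ≤ α

/-- `υ(τ,z,w) = ‖z‖ + ‖w‖₁ + ‖w(-h)‖ + ‖w(ih - τ)‖` for the `i ∈ {-1,…,I-1}` with
`τ ∈ (ih, (i+1)h]`, i.e. `i = ⌈τ/h⌉ - 1`. -/
def upsilon {n : ℕ} (h τ : ℝ) (z : E n) (w : ℝ → E n) : ℝ :=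
  ‖z‖ + norm1 h w + ‖w (-h)‖ + ‖w (((⌈τ / h⌉ - 1 : ℤ) : ℝ) * h - τ)‖

/-- Condition (φ₁). -/
def Phi1 {n : ℕ} (I : ℕ) (h : ℝ) (φ : ℝ → E n → (ℝ → E n) → ℝ) : Prop :=
  ∀ τ ∈ Set.Icc (0:ℝ) ((I:ℝ) * h), ∀ w : ℝ → E n, IsLip h w →
    ContinuousOn (fun t => φ t (leftLimit w 0) w) (Set.Icc τ ((I:ℝ) * h))

/-- Condition (φ₂). -/
def Phi2 {n : ℕ} (I : ℕ) (h : ℝ) (φ : ℝ → E n → (ℝ → E n) → ℝ) : Prop :=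
  ∀ α > 0, ∃ lam > 0, ∀ τ ∈ Set.Icc (0:ℝ) ((I:ℝ) * h),
    ∀ (z : E n) (w : ℝ → E n) (z' : E n) (w' : ℝ → E n),
      InP h α z w → InP h α z' w' →
        |φ τ z w - φ τ z' w'| ≤ lam * upsilon h τ (z - z') (w - w')

/-- Terminal condition `φ(ϑ,z,w) = σ(z,w)` on `ℝⁿ × PLip`. -/
def TermCond {n : ℕ} (I : ℕ) (h : ℝ) (σf : E n → (ℝ → E n) → ℝ)
    (φ : ℝ → E n → (ℝ → E n) → ℝ) : Prop :=
  ∀ (z : E n) (w : ℝ → E n), IsPLip h w → φ ((I:ℝ) * h) z w = σf z w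

/-- Two functionals agree on `𝔾`. -/
def AgreeOnG {n : ℕ} (I : ℕ) (h : ℝ) (φ φ' : ℝ → E n → (ℝ → E n) → ℝ) : Prop :=
  ∀ (τ : ℝ) (z : E n) (w : ℝ → E n), InG I h τ w → φ τ z w = φ' τ z w

/-- Condition (g): `g` is continuously differentiable on `[0,ϑ] × ℝⁿ`. -/
def CondG {n : ℕ} (I : ℕ) (h : ℝ) (g : ℝ → E n → E n) : Prop :=
  ContDiffOn ℝ 1 (Function.uncurry g)
    (Set.Icc (0:ℝ) ((I:ℝ) * h) ×ˢ (Set.univ : Set (E n)))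

/-- Condition (H₁): continuity. -/
def CondH1 {n : ℕ} (I : ℕ) (h : ℝ) (H : ℝ → E n → E n → E n → ℝ) : Prop :=
  ContinuousOn (fun q : ℝ × E n × E n × E n => H q.1 q.2.1 q.2.2.1 q.2.2.2)
    (Set.Icc (0:ℝ) ((I:ℝ) * h) ×ˢ (Set.univ : Set (E n × E n × E n)))

/-- Condition (H₂). -/
def CondH2 {n : ℕ} (I : ℕ) (h cH : ℝ) (H : ℝ → E n → E n → E n → ℝ) : Prop :=
  0 < cH ∧ ∀ τ ∈ Set.Icc (0:ℝ) ((I:ℝ) * h), ∀ z r s s' : E n,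
    |H τ z r s - H τ z r s'| ≤ cH * (1 + ‖z‖ + ‖r‖) * ‖s - s'‖

/-- Condition (H₃). -/
def CondH3 {n : ℕ} (I : ℕ) (h : ℝ) (H : ℝ → E n → E n → E n → ℝ) : Prop :=
  ∀ α > 0, ∃ lam > 0, ∀ τ ∈ Set.Icc (0:ℝ) ((I:ℝ) * h), ∀ z r z' r' s : E n,
    ‖z‖ ≤ α → ‖r‖ ≤ α → ‖z'‖ ≤ α → ‖r'‖ ≤ α →
      |H τ z r s - H τ z' r' s| ≤ lam * (‖z - z'‖ + ‖r - r'‖) * (1 + ‖s‖)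

/-- Condition (σ). -/
def CondSigma {n : ℕ} (h : ℝ) (σf : E n → (ℝ → E n) → ℝ) : Prop :=
  ∀ α > 0, ∃ lam > 0, ∀ (z : E n) (w : ℝ → E n) (z' : E n) (w' : ℝ → E n),
    InP h α z w → InP h α z' w' →
      |σf z w - σf z' w'| ≤ lam * (‖z - z'‖ + norm1 h (fun ξ => w ξ - w' ξ))

/-- `∂^{ci}_{τ,w} g(τ,w) = ∂g(τ,w(-h))/∂τ + ∇_x g(τ,w(-h)) · (d⁺w(-h)/dξ)`. -/
def ciDg {n : ℕ} (I : ℕ) (h : ℝ) (g : ℝ → E n → E n) (τ : ℝ) (w : ℝ → E n) : E n :=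
  derivWithin (fun t => g t (w (-h))) (Set.Icc (0:ℝ) ((I:ℝ) * h)) τ +
    fderiv ℝ (g τ) (w (-h)) (derivWithin w (Set.Ici (-h)) (-h))

/-- `F^η(x,y) = {l : ‖l‖ ≤ c_H (1 + ‖x‖ + ‖y‖) + η}`. -/
def Fset {n : ℕ} (cH η : ℝ) (x y : E n) : Set (E n) :=
  {l : E n | ‖l‖ ≤ cH * (1 + ‖x‖ + ‖y‖) + η}

/-- `x ∈ X^η(τ,z,w)`. -/
def InX {n : ℕ} (I : ℕ) (h : ℝ) (g : ℝ → E n → E n) (cH η τ : ℝ) (z : E n)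
    (w x : ℝ → E n) : Prop :=
  InLambda I h τ z w x ∧
  (∃ K, LipschitzOnWith K (fun t => x t - g t (x (t - h))) (Set.Icc τ ((I:ℝ) * h))) ∧
  ∀ᵐ t ∂(volume : Measure ℝ), t ∈ Set.Icc τ ((I:ℝ) * h) →
    ∃ l ∈ Fset cH η (x t) (x (t - h)),
      HasDerivAt (fun r => x r - g r (x (r - h))) l t

/-- `ω(τ,t,x,s)`. -/
def omegaF {n : ℕ} (h : ℝ) (g : ℝ → E n → E n) (H : ℝ → E n → E n → E n → ℝ)
    (τ t : ℝ) (x : ℝ → E n) (s : E n) : ℝ :=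
  (∫ ξ in τ..t, H ξ (x ξ) (x (ξ - h)) s) -
    ⟪(x t - g t (x (t - h))) - (x τ - g τ (x (τ - h))), s⟫_ℝ

/-- The upper minimax inequality (U):
`inf_{x ∈ X^η(τ,z,w)} [φ(t,x(t),x_t) + ω(τ,t,x,s)] ≤ φ(τ,z,w)`. -/
def Uineq {n : ℕ} (I : ℕ) (h : ℝ) (g : ℝ → E n → E n) (H : ℝ → E n → E n → E n → ℝ)
    (cH : ℝ) (φ : ℝ → E n → (ℝ → E n) → ℝ) (τ : ℝ) (z : E n) (w : ℝ → E n)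
    (t : ℝ) (s : E n) (η : ℝ) : Prop :=
  ∀ ε > 0, ∃ x : ℝ → E n, InX I h g cH η τ z w x ∧
    φ t (x t) (shift x t) + omegaF h g H τ t x s ≤ φ τ z w + ε

/-- The lower minimax inequality (L):
`sup_{x ∈ X^η(τ,z,w)} [φ(t,x(t),x_t) + ω(τ,t,x,s)] ≥ φ(τ,z,w)`. -/
def Lineq {n : ℕ} (I : ℕ) (h : ℝ) (g : ℝ → E n → E n) (H : ℝ → E n → E n → E n → ℝ)
    (cH : ℝ) (φ : ℝ → E n → (ℝ → E n) → ℝ) (τ : ℝ) (z : E n) (w : ℝ → E n)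
    (t : ℝ) (s : E n) (η : ℝ) : Prop :=
  ∀ ε > 0, ∃ x : ℝ → E n, InX I h g cH η τ z w x ∧
    φ τ z w - ε ≤ φ t (x t) (shift x t) + omegaF h g H τ t x s

/-- Minimax solution of the Cauchy problem. -/
def IsMinimaxSol {n : ℕ} (I : ℕ) (h : ℝ) (g : ℝ → E n → E n)
    (H : ℝ → E n → E n → E n → ℝ) (cH : ℝ) (σf : E n → (ℝ → E n) → ℝ)
    (φ : ℝ → E n → (ℝ → E n) → ℝ) : Prop :=
  Phi1 I h φ ∧ Phi2 I h φ ∧ TermCond I h σf φ ∧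
  ∀ (τ : ℝ) (z : E n) (w : ℝ → E n), InG I h τ w → τ < (I:ℝ) * h →
    ∀ t ∈ Set.Ioc τ ((I:ℝ) * h), ∀ s : E n,
      Uineq I h g H cH φ τ z w t s 0 ∧ Lineq I h g H cH φ τ z w t s 0

/-- Lip-minimax solution of the Cauchy problem. -/
def IsLipMinimaxSol {n : ℕ} (I : ℕ) (h : ℝ) (g : ℝ → E n → E n)
    (H : ℝ → E n → E n → E n → ℝ) (cH : ℝ) (σf : E n → (ℝ → E n) → ℝ)
    (φ : ℝ → E n → (ℝ → E n) → ℝ) : Prop :=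
  Phi1 I h φ ∧ Phi2 I h φ ∧
  (∀ w : ℝ → E n, IsLip h w →
    φ ((I:ℝ) * h) (leftLimit w 0) w = σf (leftLimit w 0) w) ∧
  ∀ τ ∈ Set.Ico (0:ℝ) ((I:ℝ) * h), ∀ w : ℝ → E n, IsLip h w →
    ∀ t ∈ Set.Ioc τ ((I:ℝ) * h), ∀ s : E n,
      Uineq I h g H cH φ τ (leftLimit w 0) w t s 0 ∧
      Lineq I h g H cH φ τ (leftLimit w 0) w t s 0

/-- C¹-minimax solution of the Cauchy problem. -/
def IsC1MinimaxSol {n : ℕ} (I : ℕ) (h : ℝ) (g : ℝ → E n → E n)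
    (H : ℝ → E n → E n → E n → ℝ) (cH : ℝ) (σf : E n → (ℝ → E n) → ℝ)
    (φ : ℝ → E n → (ℝ → E n) → ℝ) : Prop :=
  Phi1 I h φ ∧ Phi2 I h φ ∧
  (∀ w : ℝ → E n, IsC1 h w →
    φ ((I:ℝ) * h) (leftLimit w 0) w = σf (leftLimit w 0) w) ∧
  ∀ i : ℕ, i < I → ∀ τ ∈ Set.Ico ((i:ℝ) * h) (((i:ℝ) + 1) * h),
    ∀ w : ℝ → E n, IsC1 h w → ∀ t ∈ Set.Ioc τ (((i:ℝ) + 1) * h), ∀ s : E n,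
      ∀ η ∈ Set.Ioc (0:ℝ) 1,
        Uineq I h g H cH φ τ (leftLimit w 0) w t s η ∧
        Lineq I h g H cH φ τ (leftLimit w 0) w t s η

/-- `O⁺_δ(τ,z) = {(t,x) ∈ [τ,τ+δ] × ℝⁿ : ‖x - z‖ ≤ δ}`. -/
def OPlus {n : ℕ} (δ τ : ℝ) (z : E n) : Set (ℝ × E n) :=
  {p : ℝ × E n | p.1 ∈ Set.Icc τ (τ + δ) ∧ ‖p.2 - z‖ ≤ δ}

/-- Viscosity solution of the Cauchy problem. -/
def IsViscositySol {n : ℕ} (I : ℕ) (h : ℝ) (g : ℝ → E n → E n)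
    (H : ℝ → E n → E n → E n → ℝ) (σf : E n → (ℝ → E n) → ℝ)
    (φ : ℝ → E n → (ℝ → E n) → ℝ) : Prop :=
  Phi1 I h φ ∧ Phi2 I h φ ∧ TermCond I h σf φ ∧
  (∀ (τ : ℝ) (z : E n) (w : ℝ → E n), InGstar I h τ w →
    ∀ ψ : ℝ → E n → ℝ, ContDiff ℝ 1 (Function.uncurry ψ) →
    ∀ δ > 0, ∀ κ : ℝ → E n, InLambda0 I h τ z w κ →
    (∀ (t : ℝ) (x : E n), (t, x) ∈ OPlus δ τ z →
        φ τ z w - ψ τ z ≤ φ t x (shift κ t) - ψ t x) →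
    deriv (fun r => ψ r z) τ + ⟪ciDg I h g τ w, gradient (ψ τ) z⟫_ℝ +
      H τ z (w (-h)) (gradient (ψ τ) z) ≤ 0) ∧
  (∀ (τ : ℝ) (z : E n) (w : ℝ → E n), InGstar I h τ w →
    ∀ ψ : ℝ → E n → ℝ, ContDiff ℝ 1 (Function.uncurry ψ) →
    ∀ δ > 0, ∀ κ : ℝ → E n, InLambda0 I h τ z w κ →
    (∀ (t : ℝ) (x : E n), (t, x) ∈ OPlus δ τ z →
        φ t x (shift κ t) - ψ t x ≤ φ τ z w - ψ τ z) →
    0 ≤ deriv (fun r => ψ r z) τ + ⟪ciDg I h g τ w, gradient (ψ τ) z⟫_ℝ +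
      H τ z (w (-h)) (gradient (ψ τ) z))

/-- `φ` is ci-differentiable at `(τ,z,w)` with ci-derivative `a` and gradient `p`. -/
def HasCiDeriv {n : ℕ} (I : ℕ) (h : ℝ) (φ : ℝ → E n → (ℝ → E n) → ℝ)
    (τ : ℝ) (z : E n) (w : ℝ → E n) (a : ℝ) (p : E n) : Prop :=
  ∀ x : ℝ → E n, InLambda I h τ z w x →
    (fun q : ℝ × E n =>
        φ q.1 q.2 (shift x q.1) - φ τ z w - (q.1 - τ) * a - ⟪q.2 - z, p⟫_ℝ)
      =o[nhdsWithin (τ, z) (Set.Icc τ ((I:ℝ) * h) ×ˢ (Set.univ : Set (E n)))]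
      fun q : ℝ × E n => |q.1 - τ| + ‖q.2 - z‖

/-- Lower right directional derivative `∂⁻_{(1,l)} φ(τ,z,w)` along `κ ∈ Λ₀`. -/
def dLow {n : ℕ} (φ : ℝ → E n → (ℝ → E n) → ℝ) (τ : ℝ) (z : E n) (w : ℝ → E n)
    (l : E n) (κ : ℝ → E n) : EReal :=
  Filter.liminf
    (fun δ : ℝ =>
      (((φ (τ + δ) (z + δ • l) (shift κ (τ + δ)) - φ τ z w) / δ : ℝ) : EReal))
    (nhdsWithin 0 (Set.Ioi 0))

/-- Upper right directional derivative `∂⁺_{(1,l)} φ(τ,z,w)` along `κ ∈ Λ₀`. -/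
def dUpp {n : ℕ} (φ : ℝ → E n → (ℝ → E n) → ℝ) (τ : ℝ) (z : E n) (w : ℝ → E n)
    (l : E n) (κ : ℝ → E n) : EReal :=
  Filter.limsup
    (fun δ : ℝ =>
      (((φ (τ + δ) (z + δ • l) (shift κ (τ + δ)) - φ τ z w) / δ : ℝ) : EReal))
    (nhdsWithin 0 (Set.Ioi 0))

/-- `(p₀,p) ∈ D⁻φ(τ,z,w)`. -/
def InSubdiff {n : ℕ} (I : ℕ) (h : ℝ) (φ : ℝ → E n → (ℝ → E n) → ℝ)
    (τ : ℝ) (z : E n) (w : ℝ → E n) (p0 : ℝ) (p : E n) : Prop :=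
  ∀ κ : ℝ → E n, InLambda0 I h τ z w κ →
    ∀ ε > 0, ∃ δ > 0, ∀ (t : ℝ) (x : E n),
      (t, x) ∈ OPlus δ τ z → (t, x) ≠ (τ, z) →
        -ε ≤ (φ t x (shift κ t) - φ τ z w - (t - τ) * p0 - ⟪x - z, p⟫_ℝ) /
          (|t - τ| + ‖x - z‖)

/-- `(q₀,q) ∈ D⁺φ(τ,z,w)`. -/
def InSuperdiff {n : ℕ} (I : ℕ) (h : ℝ) (φ : ℝ → E n → (ℝ → E n) → ℝ)
    (τ : ℝ) (z : E n) (w : ℝ → E n) (q0 : ℝ) (q : E n) : Prop :=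
  ∀ κ : ℝ → E n, InLambda0 I h τ z w κ →
    ∀ ε > 0, ∃ δ > 0, ∀ (t : ℝ) (x : E n),
      (t, x) ∈ OPlus δ τ z → (t, x) ≠ (τ, z) →
        (φ t x (shift κ t) - φ τ z w - (t - τ) * q0 - ⟪x - z, q⟫_ℝ) /
          (|t - τ| + ‖x - z‖) ≤ ε

/-- The Dini (directional-derivative) form of the generalized solution:
statement (c) of Theorem `teo:equivalent_solutions`. -/
def DiniSol {n : ℕ} (I : ℕ) (h : ℝ) (g : ℝ → E n → E n)
    (H : ℝ → E n → E n → E n → ℝ) (cH : ℝ) (σf : E n → (ℝ → E n) → ℝ)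
    (φ : ℝ → E n → (ℝ → E n) → ℝ) : Prop :=
  Phi1 I h φ ∧ Phi2 I h φ ∧ TermCond I h σf φ ∧
  ∀ (τ : ℝ) (z : E n) (w : ℝ → E n), InGstar I h τ w → ∀ s : E n,
    ∀ κ : ℝ → E n, InLambda0 I h τ z w κ →
      (∀ ε > 0, ∃ l : E n, l - ciDg I h g τ w ∈ Fset cH 0 z (w (-h)) ∧
        dLow φ τ z w l κ +
          ((⟪ciDg I h g τ w, s⟫_ℝ + H τ z (w (-h)) s - ⟪l, s⟫_ℝ : ℝ) : EReal)
          ≤ ((ε : ℝ) : EReal)) ∧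
      (∀ ε > 0, ∃ l : E n, l - ciDg I h g τ w ∈ Fset cH 0 z (w (-h)) ∧
        ((-ε : ℝ) : EReal) ≤ dUpp φ τ z w l κ +
          ((⟪ciDg I h g τ w, s⟫_ℝ + H τ z (w (-h)) s - ⟪l, s⟫_ℝ : ℝ) : EReal))

/-- The sub/superdifferential form of the generalized solution:
statement (d) of Theorem `teo:equivalent_solutions`. -/
def SubSuperSol {n : ℕ} (I : ℕ) (h : ℝ) (g : ℝ → E n → E n)
    (H : ℝ → E n → E n → E n → ℝ) (σf : E n → (ℝ → E n) → ℝ)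
    (φ : ℝ → E n → (ℝ → E n) → ℝ) : Prop :=
  Phi1 I h φ ∧ Phi2 I h φ ∧ TermCond I h σf φ ∧
  ∀ (τ : ℝ) (z : E n) (w : ℝ → E n), InGstar I h τ w →
    (∀ (p0 : ℝ) (p : E n), InSubdiff I h φ τ z w p0 p →
      p0 + ⟪ciDg I h g τ w, p⟫_ℝ + H τ z (w (-h)) p ≤ 0) ∧
    (∀ (q0 : ℝ) (q : E n), InSuperdiff I h φ τ z w q0 q →
      0 ≤ q0 + ⟪ciDg I h g τ w, q⟫_ℝ + H τ z (w (-h)) q)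

/-- `(w^j) ∈ Γ(z,w)`. -/
def InGamma {n : ℕ} (h : ℝ) (z : E n) (w : ℝ → E n) (ws : ℕ → ℝ → E n) : Prop :=
  (∀ j, IsLip h (ws j)) ∧
  Tendsto (fun j => norm1 h (fun ξ => w ξ - ws j ξ)) atTop (nhds 0) ∧
  Tendsto (fun j => ‖z - leftLimit (ws j) 0‖) atTop (nhds 0) ∧
  ∀ ξ ∈ Set.Ico (-h) (0:ℝ), Tendsto (fun j => ‖w ξ - ws j ξ‖) atTop (nhds 0)

/-- Condition (w³) of Lemma `lem:Gamma_nonempty`. -/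
def CondW3 {n : ℕ} (h : ℝ) (w : ℝ → E n) (ws : ℕ → ℝ → E n) : Prop :=
  ∀ ξ ∈ Set.Ioo (-h) (0:ℝ), leftLimit w ξ = w ξ →
    ∃ δ > 0, Tendsto
      (fun j => ⨆ ζ : Set.Icc (-δ) δ, ‖w (ξ + ζ.1) - ws j (ξ + ζ.1)‖)
      atTop (nhds 0)

/-- `θ^α_γ(τ)` (with `λ_H = λ_H(α)`, `λ_g = λ_g(α)` given). -/
def thetaG (lamH lamg h γ τ : ℝ) : ℝ :=
  (Real.exp (-(4 * lamH + 2 * lamg / h) * τ) - γ) / γ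

/-- `ν^α_{γ,ε}(τ,z,w)`. -/
def nuG {n : ℕ} (lamH lamg h γ ε τ : ℝ) (z : E n) (w : ℝ → E n) : ℝ :=
  thetaG lamH lamg h γ τ *
    (Real.sqrt (ε ^ 4 + ‖z‖ ^ 2) +
      2 * lamH * ∫ ξ in (-h)..(0:ℝ), (1 - 2 * lamg * ξ / h) * ‖w ξ‖)

/-- `∇_z ν^α_{γ,ε}(τ,z,·)`. -/
def gradNuG {n : ℕ} (lamH lamg h γ ε τ : ℝ) (z : E n) : E n :=
  (thetaG lamH lamg h γ τ / Real.sqrt (ε ^ 4 + ‖z‖ ^ 2)) • z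

/-- `Δy(t) = Δx(t) - g(t,x(t-h)) + g(t,x'(t-h))`. -/
def dY {n : ℕ} (h : ℝ) (g : ℝ → E n → E n) (x x' : ℝ → E n) : ℝ → E n :=
  fun t => (x t - x' t) - g t (x (t - h)) + g t (x' (t - h))

/-- `ΔH^α_{γ,ε}(ξ)`. -/
def dHdiff {n : ℕ} (lamH lamg h γ ε : ℝ) (g : ℝ → E n → E n)
    (H : ℝ → E n → E n → E n → ℝ) (x x' : ℝ → E n) (ξ : ℝ) : ℝ :=
  H ξ (x ξ) (x (ξ - h)) (gradNuG lamH lamg h γ ε ξ (dY h g x x' ξ)) -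
    H ξ (x' ξ) (x' (ξ - h)) (gradNuG lamH lamg h γ ε ξ (dY h g x x' ξ)) +
    ⟪dY h g x x' ξ, gradNuG lamH lamg h γ ε ξ (dY h g x x' ξ)⟫_ℝ

/-- Continuity of `φ̂ : [0,ϑ] × Lip → ℝ` with respect to the uniform norm. -/
def HatContinuous {n : ℕ} (I : ℕ) (h : ℝ) (φh : ℝ → (ℝ → E n) → ℝ) : Prop :=
  ∀ τ ∈ Set.Icc (0:ℝ) ((I:ℝ) * h), ∀ w : ℝ → E n, IsLip h w → ∀ ε > 0, ∃ δ > 0,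
    ∀ τ' ∈ Set.Icc (0:ℝ) ((I:ℝ) * h), ∀ w' : ℝ → E n, IsLip h w' →
      |τ' - τ| ≤ δ → (∀ ξ ∈ Set.Ico (-h) (0:ℝ), ‖w' ξ - w ξ‖ ≤ δ) →
        |φh τ' w' - φh τ w| ≤ ε

/-- The functional `φ̂` from Lemma `lem:ex_un_minimax_sol`: continuous w.r.t. the uniform
norm, satisfying the terminal condition on `Lip` and the two minimax inequalities
over `X⁰`. -/
def HatSol {n : ℕ} (I : ℕ) (h : ℝ) (g : ℝ → E n → E n)
    (H : ℝ → E n → E n → E n → ℝ) (cH : ℝ) (σf : E n → (ℝ → E n) → ℝ)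
    (φh : ℝ → (ℝ → E n) → ℝ) : Prop :=
  HatContinuous I h φh ∧
  (∀ w : ℝ → E n, IsLip h w → φh ((I:ℝ) * h) w = σf (leftLimit w 0) w) ∧
  ∀ τ ∈ Set.Ico (0:ℝ) ((I:ℝ) * h), ∀ w : ℝ → E n, IsLip h w →
    ∀ t ∈ Set.Ioc τ ((I:ℝ) * h), ∀ s : E n,
      (∀ ε > 0, ∃ x : ℝ → E n, InX I h g cH 0 τ (leftLimit w 0) w x ∧
        φh t (shift x t) + omegaF h g H τ t x s ≤ φh τ w + ε) ∧
      (∀ ε > 0, ∃ x : ℝ → E n, InX I h g cH 0 τ (leftLimit w 0) w x ∧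
        φh τ w - ε ≤ φh t (shift x t) + omegaF h g H τ t x s)

/-!
Along a path `κ ∈ Λ₀(τ, z, w)`, ci-differentiability says that `(t, x) ↦ φ(t, x, κ_t)` is
Fréchet differentiable at `(τ, z)` within the half-space `[τ, ϑ] × ℝⁿ`, with derivative
`(t, x) ↦ t ∂^{ci}φ + ⟪∇_z φ, x⟫`. A test function `ψ` touching `φ` from below (above) makes
`(τ, z)` a local minimum (maximum) of `φ - ψ` on that half-space. Since `τ < ϑ`, the first-order
conditions in the directions `(1, 0)` and `(0, ±v)` give `∇_z ψ = ∇_z φ` and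
`∂ψ/∂τ ≤ ∂^{ci}φ` (resp. `≥`), and the Hamilton–Jacobi equation turns these into the viscosity
inequalities.
-/

lemma eq_and_hasFDerivWithinAt_of_isLittleO {G H : Type*} [NormedAddCommGroup G]
    [NormedSpace ℝ G] [NormedAddCommGroup H] [NormedSpace ℝ H] {f : G → H} {f' : G →L[ℝ] H}
    {s : Set G} {x : G} {c : H} (hx : x ∈ s)
    (hf : (fun y => f y - c - f' (y - x)) =o[𝓝[s] x] fun y => y - x) :
    f x = c ∧ HasFDerivWithinAt f f' s x := by
  have hc : f x = c := by
    simpa [sub_eq_zero] using hf.isBigO.eq_zero_imp.self_of_nhdsWithin hx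
  exact ⟨hc, hasFDerivWithinAt_iff_isLittleO.2 (hc ▸ hf)⟩

lemma isBigO_abs_sub_add_norm_sub {F : Type*} [NormedAddCommGroup F] (l : Filter (ℝ × F))
    (τ : ℝ) (z : F) :
    (fun q : ℝ × F => |q.1 - τ| + ‖q.2 - z‖) =O[l] fun q => q - (τ, z) := by
  refine IsBigO.of_bound 2 (Eventually.of_forall fun q => ?_)
  have h1 := norm_fst_le (q - (τ, z))
  have h2 := norm_snd_le (q - (τ, z))
  simp only [Prod.fst_sub, Prod.snd_sub, Real.norm_eq_abs] at h1 h2 ⊢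
  rw [abs_of_nonneg (by positivity)]
  linarith

section TimeSpace

variable {F : Type*} [NormedAddCommGroup F] [InnerProductSpace ℝ F]

def timeSpaceCLM (a : ℝ) (p : F) : ℝ × F →L[ℝ] ℝ :=
  a • ContinuousLinearMap.fst ℝ ℝ F + (innerSL ℝ p).comp (ContinuousLinearMap.snd ℝ ℝ F)

@[simp]
lemma timeSpaceCLM_apply (a : ℝ) (p : F) (q : ℝ × F) :
    timeSpaceCLM a p q = a * q.1 + ⟪p, q.2⟫_ℝ := rfl

lemma timeSpaceCLM_sub (a b : ℝ) (p r : F) :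
    timeSpaceCLM a p - timeSpaceCLM b r = timeSpaceCLM (a - b) (p - r) := by
  ext q <;> simp [inner_sub_left]

lemma timeSpaceCLM_neg (a : ℝ) (p : F) : -timeSpaceCLM a p = timeSpaceCLM (-a) (-p) := by
  ext q <;> simp

lemma fderiv_uncurry_eq_timeSpaceCLM [CompleteSpace F] {f : ℝ → F → ℝ} {t : ℝ} {x : F}
    (hf : DifferentiableAt ℝ (Function.uncurry f) (t, x)) :
    fderiv ℝ (Function.uncurry f) (t, x) =
      timeSpaceCLM (deriv (fun r => f r x) t) (gradient (f t) x) := by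
  have htime : HasDerivAt (fun r => f r x) (fderiv ℝ (Function.uncurry f) (t, x) (1, 0)) t := by
    simpa [Function.comp_def] using
      hf.hasFDerivAt.comp_hasDerivAt t ((hasDerivAt_id t).prodMk (hasDerivAt_const t x))
  have hspace : HasFDerivAt (f t)
      ((fderiv ℝ (Function.uncurry f) (t, x)).comp (ContinuousLinearMap.inr ℝ ℝ F)) x :=
    hf.hasFDerivAt.comp x (hasFDerivAt_prodMk_right t x)
  ext q
  · simp [htime.deriv]
  · simp [hspace.hasGradientAt.gradient, InnerProductSpace.toDual_symm_apply]

lemma IsLocalMaxOn.timeSpaceCLM_nonpos {f : ℝ × F → ℝ} {τ ϑ : ℝ} {z : F} {b : ℝ} {r : F}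
    (hτ : τ < ϑ) (hmax : IsLocalMaxOn f (Icc τ ϑ ×ˢ univ) (τ, z))
    (hf : HasFDerivWithinAt f (timeSpaceCLM b r) (Icc τ ϑ ×ˢ univ) (τ, z)) :
    b ≤ 0 ∧ r = 0 := by
  have hcone : ∀ y ∈ Icc τ ϑ ×ˢ univ, y - (τ, z) ∈ posTangentConeAt (Icc τ ϑ ×ˢ univ) (τ, z) :=
    fun y hy => sub_mem_posTangentConeAt_of_segment_subset <|
      ((convex_Icc τ ϑ).prod convex_univ).segment_subset ⟨left_mem_Icc.2 hτ.le, mem_univ z⟩ hy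
  have htime := hmax.hasFDerivWithinAt_nonpos hf
    (hcone (ϑ, z) ⟨right_mem_Icc.2 hτ.le, mem_univ z⟩)
  have hspace := hmax.hasFDerivWithinAt_eq_zero hf
    (hcone (τ, z + r) ⟨left_mem_Icc.2 hτ.le, mem_univ _⟩)
    (by simpa using hcone (τ, z - r) ⟨left_mem_Icc.2 hτ.le, mem_univ _⟩)
  simp only [timeSpaceCLM_apply, Prod.fst_sub, Prod.snd_sub, sub_self, inner_zero_right,
    add_zero, add_sub_cancel_left, mul_zero, zero_add] at htime hspace
  exact ⟨nonpos_of_mul_nonpos_left htime (sub_pos.2 hτ), inner_self_eq_zero.1 hspace⟩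

lemma IsLocalMinOn.timeSpaceCLM_nonneg {f : ℝ × F → ℝ} {τ ϑ : ℝ} {z : F} {b : ℝ} {r : F}
    (hτ : τ < ϑ) (hmin : IsLocalMinOn f (Icc τ ϑ ×ˢ univ) (τ, z))
    (hf : HasFDerivWithinAt f (timeSpaceCLM b r) (Icc τ ϑ ×ˢ univ) (τ, z)) :
    0 ≤ b ∧ r = 0 := by
  have := hmin.neg.timeSpaceCLM_nonpos hτ (timeSpaceCLM_neg b r ▸ hf.neg)
  exact ⟨neg_nonpos.1 this.1, neg_eq_zero.1 this.2⟩

end TimeSpace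

lemma InGstar.lt_horizon {n I : ℕ} {h τ : ℝ} {w : ℝ → E n} (hG : InGstar I h τ w) :
    τ < I * h := by
  obtain ⟨⟨i, hiI, hiτ, hτi⟩, -⟩ := hG
  have hh : 0 < h := by linarith
  calc τ < (i + 1) * h := hτi
    _ ≤ I * h := mul_le_mul_of_nonneg_right (by exact_mod_cast hiI) hh.le

lemma OPlus_mem_nhdsWithin {n : ℕ} {δ τ ϑ : ℝ} (z : E n) (hδ : 0 < δ) :
    OPlus δ τ z ∈ 𝓝[Icc τ ϑ ×ˢ univ] (τ, z) := by
  refine mem_nhdsWithin_iff_exists_mem_nhds_inter.2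
    ⟨Metric.closedBall (τ, z) δ, Metric.closedBall_mem_nhds _ hδ, ?_⟩
  rintro ⟨t, x⟩ ⟨hball, ⟨hτt, -⟩, -⟩
  rw [Metric.mem_closedBall, Prod.dist_eq, max_le_iff, Real.dist_eq, dist_eq_norm] at hball
  exact ⟨⟨hτt, by linarith [le_abs_self (t - τ)]⟩, hball.2⟩

section CiDeriv

variable {n I : ℕ} {h : ℝ} {φ : ℝ → E n → (ℝ → E n) → ℝ} {τ a : ℝ} {z p : E n}
  {w κ : ℝ → E n} {ψ : ℝ → E n → ℝ}

/-- `κ_τ` agrees with `w` only on `[-h, 0)`, so `φ(τ, z, κ_τ) = φ(τ, z, w)` has to be read off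
the expansion at `(t, y) = (τ, z)`. -/
lemma HasCiDeriv.hasFDerivWithinAt (hci : HasCiDeriv I h φ τ z w a p)
    (hκ : InLambda I h τ z w κ) (hτ : τ ≤ I * h) :
    φ τ z (shift κ τ) = φ τ z w ∧
      HasFDerivWithinAt (fun q : ℝ × E n => φ q.1 q.2 (shift κ q.1)) (timeSpaceCLM a p)
        (Icc τ (I * h) ×ˢ univ) (τ, z) := by
  refine eq_and_hasFDerivWithinAt_of_isLittleO (f := fun q : ℝ × E n => φ q.1 q.2 (shift κ q.1))
    (mk_mem_prod (left_mem_Icc.2 hτ) (mem_univ z)) ?_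
  refine ((hci κ hκ).congr_left fun q => ?_).trans_isBigO (isBigO_abs_sub_add_norm_sub _ τ z)
  simp only [timeSpaceCLM_apply, Prod.fst_sub, Prod.snd_sub, real_inner_comm p]
  ring

lemma HasCiDeriv.hasFDerivWithinAt_sub (hci : HasCiDeriv I h φ τ z w a p)
    (hκ : InLambda I h τ z w κ) (hτ : τ ≤ I * h)
    (hψ : DifferentiableAt ℝ (Function.uncurry ψ) (τ, z)) :
    φ τ z (shift κ τ) = φ τ z w ∧
      HasFDerivWithinAt (fun q : ℝ × E n => φ q.1 q.2 (shift κ q.1) - ψ q.1 q.2)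
        (timeSpaceCLM (a - deriv (fun r => ψ r z) τ) (p - gradient (ψ τ) z))
        (Icc τ (I * h) ×ˢ univ) (τ, z) := by
  obtain ⟨heq, hφ⟩ := hci.hasFDerivWithinAt hκ hτ
  refine ⟨heq, ?_⟩
  rw [← timeSpaceCLM_sub, ← fderiv_uncurry_eq_timeSpaceCLM hψ]
  exact hφ.sub hψ.hasFDerivAt.hasFDerivWithinAt

lemma HasCiDeriv.deriv_le_and_gradient_eq (hci : HasCiDeriv I h φ τ z w a p)
    (hκ : InLambda I h τ z w κ) (hτ : τ < I * h)
    (hψ : DifferentiableAt ℝ (Function.uncurry ψ) (τ, z)) {δ : ℝ} (hδ : 0 < δ)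
    (htouch : ∀ (t : ℝ) (x : E n), (t, x) ∈ OPlus δ τ z →
      φ τ z w - ψ τ z ≤ φ t x (shift κ t) - ψ t x) :
    deriv (fun r => ψ r z) τ ≤ a ∧ gradient (ψ τ) z = p := by
  obtain ⟨heq, hF⟩ := hci.hasFDerivWithinAt_sub hκ hτ.le hψ
  have hmin : IsLocalMinOn (fun q : ℝ × E n => φ q.1 q.2 (shift κ q.1) - ψ q.1 q.2)
      (Icc τ (I * h) ×ˢ univ) (τ, z) :=
    Filter.mem_of_superset (OPlus_mem_nhdsWithin z hδ) fun q hq => by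
      simpa [heq] using htouch q.1 q.2 hq
  obtain ⟨htime, hspace⟩ := hmin.timeSpaceCLM_nonneg hτ hF
  exact ⟨sub_nonneg.1 htime, (sub_eq_zero.1 hspace).symm⟩

lemma HasCiDeriv.le_deriv_and_gradient_eq (hci : HasCiDeriv I h φ τ z w a p)
    (hκ : InLambda I h τ z w κ) (hτ : τ < I * h)
    (hψ : DifferentiableAt ℝ (Function.uncurry ψ) (τ, z)) {δ : ℝ} (hδ : 0 < δ)
    (htouch : ∀ (t : ℝ) (x : E n), (t, x) ∈ OPlus δ τ z →
      φ t x (shift κ t) - ψ t x ≤ φ τ z w - ψ τ z) :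
    a ≤ deriv (fun r => ψ r z) τ ∧ gradient (ψ τ) z = p := by
  obtain ⟨heq, hF⟩ := hci.hasFDerivWithinAt_sub hκ hτ.le hψ
  have hmax : IsLocalMaxOn (fun q : ℝ × E n => φ q.1 q.2 (shift κ q.1) - ψ q.1 q.2)
      (Icc τ (I * h) ×ˢ univ) (τ, z) :=
    Filter.mem_of_superset (OPlus_mem_nhdsWithin z hδ) fun q hq => by
      simpa [heq] using htouch q.1 q.2 hq
  obtain ⟨htime, hspace⟩ := hmax.timeSpaceCLM_nonpos hτ hF
  exact ⟨sub_nonpos.1 htime, (sub_eq_zero.1 hspace).symm⟩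

end CiDeriv

theorem classical_solution_is_viscosity_solution_general
    {n : ℕ} (I : ℕ) (h : ℝ)
    (g : ℝ → E n → E n) (H : ℝ → E n → E n → E n → ℝ)
    (σf : E n → (ℝ → E n) → ℝ)
    (φ : ℝ → E n → (ℝ → E n) → ℝ)
    (hφ1 : Phi1 I h φ) (hφ2 : Phi2 I h φ) (hterm : TermCond I h σf φ)
    (hHJ : ∀ (τ : ℝ) (z : E n) (w : ℝ → E n), InGstar I h τ w →
      ∃ (a : ℝ) (p : E n), HasCiDeriv I h φ τ z w a p ∧
        a + ⟪ciDg I h g τ w, p⟫_ℝ + H τ z (w (-h)) p = 0) :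
    IsViscositySol I h g H σf φ := by
  refine ⟨hφ1, hφ2, hterm, ?_, ?_⟩
  · intro τ z w hG ψ hψ δ hδ κ hκ htouch
    obtain ⟨a, p, hci, hzero⟩ := hHJ τ z w hG
    obtain ⟨hderiv, rfl⟩ := hci.deriv_le_and_gradient_eq hκ.1 hG.lt_horizon
      (hψ.differentiable one_ne_zero _) hδ htouch
    linarith
  · intro τ z w hG ψ hψ δ hδ κ hκ htouch
    obtain ⟨a, p, hci, hzero⟩ := hHJ τ z w hG
    obtain ⟨hderiv, rfl⟩ := hci.le_deriv_and_gradient_eq hκ.1 hG.lt_horizon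
      (hψ.differentiable one_ne_zero _) hδ htouch
    linarith

/-- Theorem `teo:classical_and_viscosity_solutions` (b): a ci-differentiable functional
satisfying the Hamilton–Jacobi equation on `𝔾_*`, conditions (φ₁), (φ₂), and the
terminal condition is the viscosity solution. -/
theorem classical_solution_is_viscosity_solution
    {n : ℕ} (hn : 1 ≤ n) (I : ℕ) (hI : 1 ≤ I) (h : ℝ) (hh : 0 < h)
    (g : ℝ → E n → E n) (H : ℝ → E n → E n → E n → ℝ) (cH : ℝ)
    (σf : E n → (ℝ → E n) → ℝ)
    (hg : CondG I h g) (hH1 : CondH1 I h H) (hH2 : CondH2 I h cH H)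
    (hH3 : CondH3 I h H) (hσ : CondSigma h σf)
    (φ : ℝ → E n → (ℝ → E n) → ℝ)
    (hφ1 : Phi1 I h φ) (hφ2 : Phi2 I h φ) (hterm : TermCond I h σf φ)
    (hHJ : ∀ (τ : ℝ) (z : E n) (w : ℝ → E n), InGstar I h τ w →
      ∃ (a : ℝ) (p : E n), HasCiDeriv I h φ τ z w a p ∧
        a + ⟪ciDg I h g τ w, p⟫_ℝ + H τ z (w (-h)) p = 0) :
    IsViscositySol I h g H σf φ :=
  classical_solution_is_viscosity_solution_general I h g H σf φ hφ1 hφ2 hterm hHJ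
end
end

section
/- For each (z,w) ∈ ℝ^n × PLip there exists a sequence (w^j)_{j∈ℕ} ∈ Γ(z,w) such that: (w¹) w^j ∈ C¹ for every j; (w²) ‖w^j‖_∞ ≤ max(‖z‖, ‖w‖_∞) for every j; and (w³) for every ξ ∈ (−h,0) with w(ξ−0) = w(ξ) there exists δ > 0 such that max_{ζ∈[−δ,δ]} ‖w(ξ+ζ) − w^j(ξ+ζ)‖ → 0 as j → ∞. -/
open Filter Set MeasureTheory Asymptotics
open scoped InnerProductSpace Topology

noncomputable section

/-! Continue the history `w` to all of `ℝ` by `w (-h)` on the left and by `z` on `[0, ∞)`.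
The resulting `v` is bounded by `max ‖z‖ ‖w‖_∞`, right-continuous everywhere, and continuous off
finitely many points. The approximants are the double forward averages
`ε⁻¹ ∫_x^{x+ε} ε⁻¹ ∫_s^{s+ε} v` with `ε = 1/(j+1)`: averaging twice makes them `C¹`, averaging
only to the right makes them equal `z` at `0` and converge to `v` wherever `v` is
right-continuous, and no average exceeds the bound on `v`. Near a point where `w` is continuous
from both sides, `v` is continuous on a whole interval, so there the convergence is uniform. -/

theorem LipschitzOnWith.isBounded_image {α β : Type*} [PseudoMetricSpace α]
    [PseudoMetricSpace β] {K : NNReal} {f : α → β} {s : Set α} (hf : LipschitzOnWith K f s)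
    (hs : Bornology.IsBounded s) : Bornology.IsBounded (f '' s) :=
  let ⟨C, hC⟩ := Metric.isBounded_iff.1 hs
  Metric.isBounded_iff.2 ⟨K * C, forall_mem_image.2 fun _ hx => forall_mem_image.2 fun _ hy =>
    (hf.dist_le_mul _ hx _ hy).trans (by gcongr; exact hC hx hy)⟩

theorem UniformContinuousOn.exists_tendsto_nhdsLT {α : Type*} [UniformSpace α] [CompleteSpace α]
    {f : ℝ → α} {c d : ℝ} (hcd : c < d) (hf : UniformContinuousOn f (Ioo c d)) :
    ∃ L, Tendsto f (𝓝[<] d) (𝓝 L) :=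
  cauchy_map_iff_exists_tendsto.1 <| (cauchy_nhds.mono nhdsWithin_le_nhds).map_of_le hf
    (le_principal_iff.2 (Ioo_mem_nhdsLT hcd))

theorem TendstoUniformlyOn.tendsto_iSup_norm_sub {ι α β F : Type*} [NormedAddCommGroup F]
    {G : ι → α → F} {f : α → F} {p : Filter ι} {s : Set α} (h : TendstoUniformlyOn G f p s)
    (g : β → α) (hg : ∀ b, g b ∈ s) :
    Tendsto (fun i => ⨆ b, ‖f (g b) - G i (g b)‖) p (𝓝 0) := by
  refine Metric.tendsto_nhds.2 fun η hη => ?_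
  filter_upwards [Metric.tendstoUniformlyOn_iff.1 h (η / 2) (half_pos hη)] with i hi
  have hle : ⨆ b, ‖f (g b) - G i (g b)‖ ≤ η / 2 :=
    Real.iSup_le (fun b => (dist_eq_norm (f (g b)) _ ▸ hi _ (hg b)).le) (half_pos hη).le
  rw [Real.dist_0_eq_abs, abs_of_nonneg (Real.iSup_nonneg fun _ => norm_nonneg _)]
  linarith

theorem intervalIntegrable_of_countable_not_continuousAt {F : Type*} [NormedAddCommGroup F]
    {u : ℝ → F} (hc : {t | ¬ContinuousAt u t}.Countable) {M : ℝ} (hM : ∀ t, ‖u t‖ ≤ M)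
    (a b : ℝ) : IntervalIntegrable u volume a b :=
  intervalIntegrable_iff.2 <| Measure.integrableOn_of_bounded measure_Ioc_lt_top.ne
    (StronglyMeasurable.of_countable_not_continuousAt hc).aestronglyMeasurable
    (ae_of_all _ hM)

section ForwardAverage

variable {F : Type*} [NormedAddCommGroup F] [NormedSpace ℝ F]
  {u : ℝ → F} {ε x : ℝ}

def fwdAvg (u : ℝ → F) (ε x : ℝ) : F := ε⁻¹ • ∫ t in x..x + ε, u t

theorem fwdAvg_eq_sub_primitive (hu : ∀ a b, IntervalIntegrable u volume a b) (ε x : ℝ) :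
    fwdAvg u ε x = ε⁻¹ • ((∫ t in 0..x + ε, u t) - ∫ t in 0..x, u t) := by
  rw [fwdAvg, intervalIntegral.integral_interval_sub_left (hu 0 _) (hu 0 _)]

theorem continuous_fwdAvg (hu : ∀ a b, IntervalIntegrable u volume a b) (ε : ℝ) :
    Continuous (fwdAvg u ε) := by
  have hU := intervalIntegral.continuous_primitive hu 0
  simp_rw [funext (fwdAvg_eq_sub_primitive hu ε)]
  exact ((hU.comp (continuous_add_const ε)).sub hU).const_smul ε⁻¹

variable [CompleteSpace F]

theorem norm_fwdAvg_sub_le (hε : 0 < ε) (hu : IntervalIntegrable u volume x (x + ε))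
    {c : F} {C : ℝ} (hC : ∀ t ∈ Icc x (x + ε), ‖u t - c‖ ≤ C) :
    ‖fwdAvg u ε x - c‖ ≤ C := by
  have hc : c = ε⁻¹ • ∫ _ in x..x + ε, c := by
    rw [intervalIntegral.integral_const, add_sub_cancel_left, smul_smul,
      inv_mul_cancel₀ hε.ne', one_smul]
  have hint : ‖∫ t in x..x + ε, (u t - c)‖ ≤ C * |x + ε - x| :=
    intervalIntegral.norm_integral_le_of_norm_le_const fun t ht => by
      rw [uIoc_of_le (by linarith)] at ht
      exact hC t (Ioc_subset_Icc_self ht)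
  rw [add_sub_cancel_left, abs_of_pos hε] at hint
  rw [fwdAvg, hc, ← smul_sub, ← intervalIntegral.integral_sub hu intervalIntegrable_const,
    norm_smul, norm_inv, Real.norm_of_nonneg hε.le]
  calc ε⁻¹ * ‖∫ t in x..x + ε, (u t - c)‖ ≤ ε⁻¹ * (C * ε) := by gcongr
    _ = C := by field_simp

theorem hasDerivAt_fwdAvg (hu : Continuous u) (ε x : ℝ) :
    HasDerivAt (fwdAvg u ε) (ε⁻¹ • (u (x + ε) - u x)) x := by
  have hU (y : ℝ) : HasDerivAt (fun y => ∫ t in (0 : ℝ)..y, u t) (u y) y :=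
    hu.integral_hasStrictDerivAt 0 y |>.hasDerivAt
  simp_rw [funext (fwdAvg_eq_sub_primitive hu.intervalIntegrable ε)]
  exact (((hU (x + ε)).comp_add_const x ε).sub (hU x)).const_smul ε⁻¹

theorem contDiff_fwdAvg (hu : Continuous u) (ε : ℝ) : ContDiff ℝ 1 (fwdAvg u ε) := by
  rw [contDiff_one_iff_deriv]
  refine ⟨fun x => (hasDerivAt_fwdAvg hu ε x).differentiableAt, ?_⟩
  rw [funext fun x => (hasDerivAt_fwdAvg hu ε x).deriv]
  exact ((hu.comp (continuous_add_const ε)).sub hu).const_smul ε⁻¹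

def doubleAvg (u : ℝ → F) (ε : ℝ) : ℝ → F := fwdAvg (fwdAvg u ε) ε

theorem contDiff_doubleAvg (hu : ∀ a b, IntervalIntegrable u volume a b) (ε : ℝ) :
    ContDiff ℝ 1 (doubleAvg u ε) :=
  contDiff_fwdAvg (continuous_fwdAvg hu ε) ε

theorem norm_doubleAvg_sub_le (hε : 0 < ε) (hu : ∀ a b, IntervalIntegrable u volume a b)
    {c : F} {C : ℝ} (hC : ∀ t ∈ Icc x (x + 2 * ε), ‖u t - c‖ ≤ C) :
    ‖doubleAvg u ε x - c‖ ≤ C :=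
  norm_fwdAvg_sub_le hε ((continuous_fwdAvg hu ε).intervalIntegrable _ _) fun s hs =>
    norm_fwdAvg_sub_le hε (hu _ _) fun t ht =>
      hC t ⟨hs.1.trans ht.1, by linarith [ht.2, hs.2]⟩

theorem norm_doubleAvg_le (hε : 0 < ε) (hu : ∀ a b, IntervalIntegrable u volume a b) {M : ℝ}
    (hM : ∀ t, ‖u t‖ ≤ M) (x : ℝ) : ‖doubleAvg u ε x‖ ≤ M := by
  simpa using norm_doubleAvg_sub_le (x := x) (c := 0) hε hu fun t _ => by simpa using hM t

theorem doubleAvg_eq_of_forall_eq (hε : 0 < ε) (hu : ∀ a b, IntervalIntegrable u volume a b)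
    {c : F} (hc : ∀ t ∈ Icc x (x + 2 * ε), u t = c) : doubleAvg u ε x = c :=
  sub_eq_zero.1 <| norm_le_zero_iff.1 <| norm_doubleAvg_sub_le hε hu fun t ht => by
    rw [hc t ht, sub_self, norm_zero]

theorem tendsto_doubleAvg_of_continuousWithinAt (hu : ∀ a b, IntervalIntegrable u volume a b)
    (hx : ContinuousWithinAt u (Ici x) x) :
    Tendsto (fun ε => doubleAvg u ε x) (𝓝[>] 0) (𝓝 (u x)) := by
  refine Metric.tendsto_nhds.2 fun η hη => ?_
  obtain ⟨ρ, hρ, hux⟩ := Metric.continuousWithinAt_iff.1 hx (η / 2) (half_pos hη)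
  filter_upwards [Ioo_mem_nhdsGT (half_pos hρ)] with ε hε
  rw [dist_eq_norm]
  refine (norm_doubleAvg_sub_le hε.1 hu fun t ht => ?_).trans_lt (half_lt_self hη)
  rw [← dist_eq_norm]
  refine (hux ht.1 ?_).le
  rw [Real.dist_eq, abs_of_nonneg (by linarith [ht.1])]
  linarith [ht.2, hε.2]

theorem tendstoUniformlyOn_doubleAvg (hu : ∀ a b, IntervalIntegrable u volume a b) {a b r : ℝ}
    (hr : 0 < r) (hc : ContinuousOn u (Icc a (b + r))) :
    TendstoUniformlyOn (doubleAvg u) u (𝓝[>] 0) (Icc a b) := by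
  have huc := isCompact_Icc.uniformContinuousOn_of_continuous hc
  rw [Metric.uniformContinuousOn_iff_le] at huc
  refine Metric.tendstoUniformlyOn_iff.2 fun η hη => ?_
  obtain ⟨ρ, hρ, hux⟩ := huc (η / 2) (half_pos hη)
  filter_upwards [Ioo_mem_nhdsGT (half_pos (lt_min hρ hr))] with ε hε x hx
  rw [dist_comm, dist_eq_norm]
  refine (norm_doubleAvg_sub_le hε.1 hu fun t ht => ?_).trans_lt (half_lt_self hη)
  have hε' := hε.2
  rw [lt_div_iff₀ two_pos, lt_min_iff] at hε'
  rw [← dist_eq_norm]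
  refine hux t ⟨hx.1.trans ht.1, by linarith [ht.2, hx.2]⟩ x ⟨hx.1, by linarith [hx.2]⟩ ?_
  rw [Real.dist_eq, abs_of_nonneg (by linarith [ht.1])]
  linarith [ht.2]

theorem tendsto_intervalIntegral_norm_sub_doubleAvg
    (hu : ∀ a b, IntervalIntegrable u volume a b) {M : ℝ} (hM : ∀ t, ‖u t‖ ≤ M)
    (hc : ∀ t, ContinuousWithinAt u (Ici t) t) (a b : ℝ) :
    Tendsto (fun ε => ∫ t in a..b, ‖u t - doubleAvg u ε t‖) (𝓝[>] 0) (𝓝 0) := by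
  have hpos : ∀ᶠ ε : ℝ in 𝓝[>] 0, 0 < ε := self_mem_nhdsWithin
  simpa using intervalIntegral.tendsto_integral_filter_of_dominated_convergence
    (f := fun _ => (0 : ℝ)) (fun _ => M + M)
    (Eventually.of_forall fun ε => ((hu a b).def'.aestronglyMeasurable.sub
      (contDiff_doubleAvg hu ε).continuous.aestronglyMeasurable).norm)
    (hpos.mono fun ε hε => ae_of_all _ fun t _ => by
      rw [norm_norm]
      exact (norm_sub_le _ _).trans (add_le_add (hM t) (norm_doubleAvg_le hε hu hM t)))
    intervalIntegrable_const
    (ae_of_all _ fun t _ => by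
      simpa [norm_sub_rev] using
        tendsto_iff_norm_sub_tendsto_zero.1 (tendsto_doubleAvg_of_continuousWithinAt hu (hc t)))

end ForwardAverage

namespace PiecewiseLipOn

variable {n : ℕ} {x : ℝ → E n} {a b t : ℝ}

theorem continuousWithinAt_Ici (hx : PiecewiseLipOn x a b) (ht : t ∈ Ico a b) :
    ContinuousWithinAt x (Ici t) t := by
  obtain ⟨k, ξ, -, rfl, rfl, -, hlip⟩ := hx
  obtain ⟨i, hi, hti⟩ := mem_iUnion₂.1 (Ico_subset_biUnion_Ico k ξ ht)
  obtain ⟨K, hK⟩ := hlip i (Finset.mem_range.1 hi)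
  exact (hK.continuousOn t hti).mono_of_mem_nhdsWithin (Ico_mem_nhdsGE_of_mem hti)

theorem exists_tendsto_nhdsLT (hx : PiecewiseLipOn x a b) (ht : t ∈ Ioc a b) :
    ∃ L, Tendsto x (𝓝[<] t) (𝓝 L) := by
  obtain ⟨k, ξ, -, rfl, rfl, -, hlip⟩ := hx
  obtain ⟨i, hi, hti⟩ := mem_iUnion₂.1 (Ioc_subset_biUnion_Ioc k ξ ht)
  obtain ⟨K, hK⟩ := hlip i (Finset.mem_range.1 hi)
  exact (hK.mono (Ioo_subset_Ico_self.trans (Ico_subset_Ico_right hti.2))).uniformContinuousOn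
    |>.exists_tendsto_nhdsLT hti.1

theorem continuousAt_of_leftLimit_eq (hx : PiecewiseLipOn x a b) (ht : t ∈ Ioo a b)
    (hleft : leftLimit x t = x t) : ContinuousAt x t := by
  obtain ⟨L, hL⟩ := hx.exists_tendsto_nhdsLT ⟨ht.1, ht.2.le⟩
  rw [leftLimit, hL.limUnder_eq] at hleft
  exact continuousAt_iff_continuous_left_right.2
    ⟨continuousWithinAt_Iio_iff_Iic.1 (hleft ▸ hL :), hx.continuousWithinAt_Ici ⟨ht.1.le, ht.2⟩⟩

theorem finite_setOf_not_continuousAt (hx : PiecewiseLipOn x a b) :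
    {t ∈ Ioo a b | ¬ContinuousAt x t}.Finite := by
  obtain ⟨k, ξ, -, rfl, rfl, -, hlip⟩ := hx
  refine ((finite_Iio k).image ξ).subset fun t ⟨ht, hdisc⟩ => ?_
  obtain ⟨i, hi, hti⟩ := mem_iUnion₂.1 (Ico_subset_biUnion_Ico k ξ (Ioo_subset_Ico_self ht))
  obtain ⟨K, hK⟩ := hlip i (Finset.mem_range.1 hi)
  refine ⟨i, Finset.mem_range.1 hi, hti.1.eq_of_not_lt fun hlt => hdisc ?_⟩
  exact (hK.continuousOn.mono Ioo_subset_Ico_self).continuousAt (Ioo_mem_nhds hlt hti.2)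

theorem eventually_continuousAt (hx : PiecewiseLipOn x a b) (ht : t ∈ Ioo a b)
    (hleft : leftLimit x t = x t) : ∀ᶠ s in 𝓝 t, ContinuousAt x s := by
  have hS : ({s ∈ Ioo a b | ¬ContinuousAt x s} \ {t})ᶜ ∈ 𝓝 t :=
    (hx.finite_setOf_not_continuousAt.sdiff).isClosed.isOpen_compl.mem_nhds (by simp)
  filter_upwards [hS, Ioo_mem_nhds ht.1 ht.2] with s hsS hs
  by_cases hst : s = t
  · exact hst ▸ hx.continuousAt_of_leftLimit_eq ht hleft
  · by_contra hdisc
    exact hsS ⟨⟨hs, hdisc⟩, hst⟩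

theorem isBounded_image (hx : PiecewiseLipOn x a b) : Bornology.IsBounded (x '' Ico a b) := by
  obtain ⟨k, ξ, -, rfl, rfl, -, hlip⟩ := hx
  refine Bornology.IsBounded.subset ?_ ((image_mono (Ico_subset_biUnion_Ico k ξ)).trans
    (image_iUnion₂ _ _).subset)
  refine (Bornology.isBounded_biUnion (Finset.range k).finite_toSet).2 fun i hi => ?_
  obtain ⟨K, hK⟩ := hlip i (Finset.mem_range.1 hi)
  exact hK.isBounded_image (Metric.isBounded_Ico _ _)

end PiecewiseLipOn

theorem leftLimit_of_continuousAt {n : ℕ} {f : ℝ → E n} {a : ℝ} (hf : ContinuousAt f a) :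
    leftLimit f a = f a :=
  (hf.tendsto.mono_left nhdsWithin_le_nhds).limUnder_eq

theorem IsC1.isLip {n : ℕ} {h : ℝ} {w : ℝ → E n} (hw : IsC1 h w) : IsLip h w :=
  let ⟨K, hK⟩ := ContDiffOn.exists_lipschitzOnWith hw one_ne_zero (convex_Icc _ _) isCompact_Icc
  ⟨K, hK.mono Ico_subset_Icc_self⟩

theorem IsPLip.norm_le_normInf {n : ℕ} {h t : ℝ} {w : ℝ → E n} (hw : IsPLip h w)
    (ht : t ∈ Ico (-h) 0) : ‖w t‖ ≤ normInf h w := by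
  obtain ⟨C, hC⟩ := (PiecewiseLipOn.isBounded_image hw).exists_norm_le
  exact le_ciSup ⟨C, forall_mem_range.2 fun s => hC _ (mem_image_of_mem w s.2)⟩
    (⟨t, ht⟩ : Ico (-h) (0 : ℝ))

section ExtendHistory

variable {n : ℕ} {h : ℝ} {z : E n} {w : ℝ → E n} {t : ℝ}

def extendHistory (h : ℝ) (z : E n) (w : ℝ → E n) (t : ℝ) : E n :=
  if t < 0 then w (max t (-h)) else z

theorem extendHistory_of_mem_Ico (ht : t ∈ Ico (-h) 0) : extendHistory h z w t = w t := by
  simp [extendHistory, ht.2, max_eq_left ht.1]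

theorem extendHistory_of_nonneg (ht : 0 ≤ t) : extendHistory h z w t = z := by
  simp [extendHistory, not_lt.2 ht]

theorem extendHistory_of_lt (hh : 0 < h) (ht : t < -h) : extendHistory h z w t = w (-h) := by
  simp [extendHistory, ht.trans (neg_neg_of_pos hh), max_eq_right ht.le]

theorem norm_extendHistory_le (hh : 0 < h) {M : ℝ} (hz : ‖z‖ ≤ M)
    (hw : ∀ s ∈ Ico (-h) 0, ‖w s‖ ≤ M) (t : ℝ) : ‖extendHistory h z w t‖ ≤ M := by
  unfold extendHistory
  split_ifs with ht
  · exact hw _ ⟨le_max_right _ _, max_lt ht (neg_neg_of_pos hh)⟩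
  · exact hz

theorem continuousAt_extendHistory (ht : t ∈ Ioo (-h) 0) (hw : ContinuousAt w t) :
    ContinuousAt (extendHistory h z w) t :=
  hw.congr <| eventuallyEq_of_mem (Ioo_mem_nhds ht.1 ht.2) fun _ hs =>
    (extendHistory_of_mem_Ico ⟨hs.1.le, hs.2⟩).symm

theorem continuousWithinAt_Ici_extendHistory (hh : 0 < h) (hw : IsPLip h w) (t : ℝ) :
    ContinuousWithinAt (extendHistory h z w) (Ici t) t := by
  by_cases ht : t < 0
  · have hmax : ContinuousWithinAt (fun s => w (max s (-h))) (Ici t) t :=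
      (hw.continuousWithinAt_Ici ⟨le_max_right t (-h), max_lt ht (neg_neg_of_pos hh)⟩).comp
        (f := fun s => max s (-h)) (continuous_id.max continuous_const).continuousWithinAt
        fun s hs => max_le_max_right (-h) hs
    refine hmax.congr_of_eventuallyEq ?_ (if_pos ht)
    filter_upwards [mem_nhdsWithin_of_mem_nhds (Iio_mem_nhds ht)] with s hs
    exact if_pos hs
  · exact continuousWithinAt_const.congr
      (fun s hs => extendHistory_of_nonneg ((not_lt.1 ht).trans hs))
      (extendHistory_of_nonneg (not_lt.1 ht))

theorem finite_setOf_not_continuousAt_extendHistory (hh : 0 < h) (hw : IsPLip h w) :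
    {t | ¬ContinuousAt (extendHistory h z w) t}.Finite := by
  refine ((hw.finite_setOf_not_continuousAt.insert 0).insert (-h)).subset fun t ht => ?_
  rcases lt_trichotomy t (-h) with hlt | rfl | hgt
  · exact absurd (continuousAt_const.congr (eventuallyEq_of_mem (Iio_mem_nhds hlt)
      fun s hs => (extendHistory_of_lt hh hs).symm)) ht
  · exact mem_insert _ _
  rcases lt_trichotomy t 0 with hlt | rfl | hpos
  · exact .inr (.inr ⟨⟨hgt, hlt⟩, fun hc => ht (continuousAt_extendHistory ⟨hgt, hlt⟩ hc)⟩)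
  · exact .inr (mem_insert _ _)
  · exact absurd (continuousAt_const.congr (eventuallyEq_of_mem (Ioi_mem_nhds hpos)
      fun s hs => (extendHistory_of_nonneg (le_of_lt hs)).symm)) ht

end ExtendHistory

theorem norm1_sub_eq_integral_extendHistory {n : ℕ} {h : ℝ} {z : E n} {w : ℝ → E n}
    (hh : 0 < h) (g : ℝ → E n) :
    norm1 h (fun t => w t - g t) = ∫ t in (-h)..0, ‖extendHistory h z w t - g t‖ := by
  refine intervalIntegral.integral_congr_ae ?_
  filter_upwards [Measure.ae_ne volume 0] with t ht0 ht
  rw [uIoc_of_le (neg_nonpos.2 hh.le)] at ht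
  rw [extendHistory_of_mem_Ico ⟨ht.1.le, lt_of_le_of_ne ht.2 ht0⟩]

theorem condW3_doubleAvg_extendHistory {n : ℕ} {h : ℝ} {z : E n} {w : ℝ → E n}
    (hw : IsPLip h w) (hv : ∀ a b, IntervalIntegrable (extendHistory h z w) volume a b)
    {ε : ℕ → ℝ} (hε : Tendsto ε atTop (𝓝[>] 0)) :
    CondW3 h w fun j => doubleAvg (extendHistory h z w) (ε j) := by
  intro ξ hξ hleft
  obtain ⟨ρ, hρ, hball⟩ := Metric.eventually_nhds_iff.1
    ((PiecewiseLipOn.eventually_continuousAt hw hξ hleft).and (Ioo_mem_nhds hξ.1 hξ.2))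
  set δ := ρ / 3 with hδ
  have hsub : Icc (ξ - δ) (ξ + δ + δ) ⊆ Metric.ball ξ ρ := fun s hs => by
    rw [Metric.mem_ball, Real.dist_eq, abs_lt]
    constructor <;> linarith [hs.1, hs.2, hδ]
  have hcont : ContinuousOn (extendHistory h z w) (Icc (ξ - δ) (ξ + δ + δ)) := fun s hs =>
    (continuousAt_extendHistory (hball (hsub hs)).2 (hball (hsub hs)).1).continuousWithinAt
  have hunif := (tendstoUniformlyOn_doubleAvg hv (by positivity) hcont).congr_right
    fun s hs => extendHistory_of_mem_Ico (Ioo_subset_Ico_self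
      (hball (hsub ⟨hs.1, by linarith [hs.2, hδ]⟩)).2)
  refine ⟨δ, by positivity, ?_⟩
  exact (hunif.tendsto_iSup_norm_sub (fun ζ : Icc (-δ) δ => ξ + ζ)
    fun ζ => ⟨by linarith [ζ.2.1], by linarith [ζ.2.2]⟩).comp hε

theorem gamma_nonempty_general
    {n : ℕ} (h : ℝ) (hh : 0 < h)
    (z : E n) (w : ℝ → E n) (hw : IsPLip h w) :
    ∃ ws : ℕ → ℝ → E n, InGamma h z w ws ∧
      (∀ j, IsC1 h (ws j)) ∧
      (∀ j, normInf h (ws j) ≤ max ‖z‖ (normInf h w)) ∧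
      CondW3 h w ws := by
  set v := extendHistory h z w
  set M := max ‖z‖ (normInf h w)
  have hvM : ∀ t, ‖v t‖ ≤ M := norm_extendHistory_le hh (le_max_left _ _) fun s hs =>
    (hw.norm_le_normInf hs).trans (le_max_right _ _)
  have hv : ∀ a b, IntervalIntegrable v volume a b :=
    intervalIntegrable_of_countable_not_continuousAt
      (finite_setOf_not_continuousAt_extendHistory hh hw).countable hvM
  have hrc : ∀ t, ContinuousWithinAt v (Ici t) t := continuousWithinAt_Ici_extendHistory hh hw
  set ε : ℕ → ℝ := fun j => 1 / (j + 1)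
  have hεpos : ∀ j, 0 < ε j := fun j => by positivity
  have hε : Tendsto ε atTop (𝓝[>] 0) :=
    tendsto_nhdsWithin_iff.2 ⟨tendsto_one_div_add_atTop_nhds_zero_nat, .of_forall hεpos⟩
  have hC1 : ∀ j, ContDiff ℝ 1 (doubleAvg v (ε j)) := fun j => contDiff_doubleAvg hv _
  have hleft : ∀ j, leftLimit (doubleAvg v (ε j)) 0 = z := fun j => by
    rw [leftLimit_of_continuousAt (hC1 j).continuous.continuousAt]
    exact doubleAvg_eq_of_forall_eq (hεpos j) hv fun t ht => extendHistory_of_nonneg ht.1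
  refine ⟨fun j => doubleAvg v (ε j), ⟨fun j => IsC1.isLip (hC1 j).contDiffOn, ?_, ?_, ?_⟩,
    fun j => (hC1 j).contDiffOn, fun j => ?_, condW3_doubleAvg_extendHistory hw hv hε⟩
  · exact ((tendsto_intervalIntegral_norm_sub_doubleAvg hv hvM hrc (-h) 0).comp hε).congr
      fun j => (norm1_sub_eq_integral_extendHistory hh _).symm
  · simp [hleft]
  · intro t ht
    simpa [norm_sub_rev, extendHistory_of_mem_Ico ht, v] using tendsto_iff_norm_sub_tendsto_zero.1
      ((tendsto_doubleAvg_of_continuousWithinAt hv (hrc t)).comp hε)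
  · exact Real.iSup_le (fun s => norm_doubleAvg_le (hεpos j) hv hvM _)
      ((norm_nonneg z).trans (le_max_left _ _))

/-- Lemma `lem:Gamma_nonempty`: every `(z,w) ∈ ℝⁿ × PLip` admits an approximating
sequence in `Γ(z,w)` satisfying conditions (w¹), (w²), (w³). -/
theorem gamma_nonempty
    {n : ℕ} (hn : 1 ≤ n) (h : ℝ) (hh : 0 < h)
    (z : E n) (w : ℝ → E n) (hw : IsPLip h w) :
    ∃ ws : ℕ → ℝ → E n, InGamma h z w ws ∧
      (∀ j, IsC1 h (ws j)) ∧
      (∀ j, normInf h (ws j) ≤ max ‖z‖ (normInf h w)) ∧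
      CondW3 h w ws :=
  gamma_nonempty_general h hh z w hw
end
end
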